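/- Let S be a finite set, P : S → PMF(S), f : S → ℕ, and let λ be a finitely supported PMF on S × ℕ that is invariant for the extended kernel κ. Then ∑_{(s,m) : f(s) > m} λ(s,m)·(m + 1) = ∑_{(s,m) : f(s) < m} λ(s,m)·m. -/
import Mathlib


/-- The myopic adjustment rule: move mass one step toward the current challenge. -/
def adjust (m d : ℕ) : ℕ := if m < d then m + 1 else if d < m then m - 1 else m

/-- The extended kernel on `S × ℕ`: the environment state moves according to `P`,
and the mass updates deterministically to `adjust m (f s)`. -/
noncomputable def extKernel {S : Type*} (P : S → PMF S) (f : S → ℕ) : S × ℕ → PMF (S × ℕ) :=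
  fun p => (P p.1).map (fun s' => (s', adjust p.2 (f p.1)))

/-- Triangular numbers, used as a potential function. -/
def gaux : ℕ → ℕ
  | 0 => 0
  | (m+1) => gaux m + (m+1)

lemma gaux_key (m d : ℕ) :
    gaux (adjust m d) + (if d < m then m else 0) = gaux m + (if m < d then m + 1 else 0) := by
  unfold adjust
  rcases lt_trichotomy m d with h | h | h
  · simp [h, not_lt.mpr h.le, gaux]
  · simp [h]
  · obtain ⟨k, rfl⟩ : ∃ k, m = k + 1 := ⟨m - 1, by omega⟩
    simp [h, not_lt.mpr h.le, gaux]

lemma gaux_keyE (m d : ℕ) :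
    (gaux (adjust m d) : ENNReal) + (if d < m then (m : ENNReal) else 0) =
      (gaux m : ENNReal) + (if m < d then (m : ENNReal) + 1 else 0) := by
  have := gaux_key m d
  rcases lt_trichotomy m d with h | h | h <;>
    simp only [h, if_pos, if_neg, not_lt.mpr h.le, lt_irrefl, if_false, not_lt, le_refl] at this ⊢ <;>
    [skip; skip; skip] <;>
  · first
    | (exact_mod_cast this)
    | (push_cast; exact_mod_cast congrArg (Nat.cast : ℕ → ENNReal) this)

lemma tsum_map_mul {α β : Type*} (μ : PMF α) (h : α → β) (G : β → ENNReal) :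
    ∑' b, (μ.map h) b * G b = ∑' a, μ a * G (h a) := by
  classical
  calc ∑' b, (μ.map h) b * G b
      = ∑' b, ∑' a, (if b = h a then μ a * G b else 0) := by
        refine tsum_congr fun b => ?_
        rw [PMF.map_apply, ← ENNReal.tsum_mul_right]
        exact tsum_congr fun a => by simp [ite_mul]
    _ = ∑' a, ∑' b, (if b = h a then μ a * G b else 0) := ENNReal.tsum_comm
    _ = ∑' a, μ a * G (h a) := by
        refine tsum_congr fun a => ?_
        rw [tsum_eq_single (h a) (by intro b hb; simp [hb])]
        simp

/-- the level-crossing (flow-balance) identity, equation (1) of the paper: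
`∑_{(s,m): f s > m} λ(s,m)·(m+1) = ∑_{(s,m): f s < m} λ(s,m)·m`. -/
theorem level_crossing {S : Type*} [Fintype S] (P : S → PMF S) (f : S → ℕ)
    (lam : PMF (S × ℕ)) (hfin : lam.support.Finite)
    (hinv : lam.bind (extKernel P f) = lam) :
    ∑' p : S × ℕ, (if p.2 < f p.1 then lam p * ((p.2 : ENNReal) + 1) else 0) =
      ∑' p : S × ℕ, (if f p.1 < p.2 then lam p * (p.2 : ENNReal) else 0) := by
  classical
  -- inner expectation of the potential under one kernel step
  have hinner : ∀ p : S × ℕ, ∑' q : S × ℕ, extKernel P f p q * (gaux q.2 : ENNReal)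
      = (gaux (adjust p.2 (f p.1)) : ENNReal) := by
    intro p
    rw [extKernel, tsum_map_mul]
    simp only []
    rw [ENNReal.tsum_mul_right, PMF.tsum_coe, one_mul]
  -- invariance gives equality of expectations of the potential
  have hbind : ∑' p : S × ℕ, lam p * (gaux (adjust p.2 (f p.1)) : ENNReal)
      = ∑' p : S × ℕ, lam p * (gaux p.2 : ENNReal) := by
    have key : ∑' q : S × ℕ, (lam.bind (extKernel P f)) q * (gaux q.2 : ENNReal)
        = ∑' p : S × ℕ, lam p * (gaux (adjust p.2 (f p.1)) : ENNReal) := by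
      simp only [PMF.bind_apply]
      calc ∑' q : S × ℕ, (∑' p : S × ℕ, lam p * extKernel P f p q) * (gaux q.2 : ENNReal)
          = ∑' (q : S × ℕ) (p : S × ℕ), lam p * (extKernel P f p q * (gaux q.2 : ENNReal)) := by
            refine tsum_congr fun q => ?_
            rw [← ENNReal.tsum_mul_right]
            exact tsum_congr fun p => by ring
        _ = ∑' (p : S × ℕ) (q : S × ℕ), lam p * (extKernel P f p q * (gaux q.2 : ENNReal)) :=
            ENNReal.tsum_comm
        _ = ∑' p : S × ℕ, lam p * ∑' q : S × ℕ, extKernel P f p q * (gaux q.2 : ENNReal) := by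
            exact tsum_congr fun p => ENNReal.tsum_mul_left.symm ▸ rfl
        _ = ∑' p : S × ℕ, lam p * (gaux (adjust p.2 (f p.1)) : ENNReal) := by
            exact tsum_congr fun p => by rw [hinner]
    rw [← key, hinv]
  -- the common expectation is finite
  have hT : ∑' p : S × ℕ, lam p * (gaux p.2 : ENNReal) ≠ ⊤ := by
    rw [tsum_eq_sum (s := hfin.toFinset)
      (fun p hp => by
        have : lam p = 0 := by
          by_contra h
          exact hp (hfin.mem_toFinset.mpr (PMF.mem_support_iff lam p |>.mpr h))
        simp [this])]
    exact (ENNReal.sum_lt_top.mpr fun p _ =>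
      ENNReal.mul_lt_top (PMF.apply_lt_top lam p) (ENNReal.natCast_lt_top _)).ne
  -- summed pointwise flow-balance identity
  have hsum : (∑' p : S × ℕ, lam p * (gaux (adjust p.2 (f p.1)) : ENNReal)) +
      (∑' p : S × ℕ, (if f p.1 < p.2 then lam p * (p.2 : ENNReal) else 0)) =
      (∑' p : S × ℕ, lam p * (gaux p.2 : ENNReal)) +
      (∑' p : S × ℕ, (if p.2 < f p.1 then lam p * ((p.2 : ENNReal) + 1) else 0)) := by
    rw [← ENNReal.tsum_add, ← ENNReal.tsum_add]
    refine tsum_congr fun p => ?_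
    have h1 : lam p * (gaux (adjust p.2 (f p.1)) : ENNReal) +
        (if f p.1 < p.2 then lam p * (p.2 : ENNReal) else 0) =
        lam p * ((gaux (adjust p.2 (f p.1)) : ENNReal) +
          (if f p.1 < p.2 then (p.2 : ENNReal) else 0)) := by
      split_ifs <;> ring
    have h2 : lam p * (gaux p.2 : ENNReal) +
        (if p.2 < f p.1 then lam p * ((p.2 : ENNReal) + 1) else 0) =
        lam p * ((gaux p.2 : ENNReal) +
          (if p.2 < f p.1 then (p.2 : ENNReal) + 1 else 0)) := by
      split_ifs <;> ring
    rw [h1, h2, gaux_keyE p.2 (f p.1)]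
  rw [hbind] at hsum
  exact ((ENNReal.add_right_inj hT).mp hsum).symm
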